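/- For signed compositions λ, μ of n, the following are equivalent: (a) λ ∼ μ (one is a reordering of the other); (b) G_λ = w^{−1} G_μ w for some w ∈ S_n; (c) G_λ = g^{−1} G_μ g for some g ∈ G_{r,n}. -/

import Mathlib

/-!
Lay the positions `1, …, n` out as consecutive blocks of sizes `|μ_1|, …, |μ_k|`. Every
element of `G_μ` has a permutation part preserving each block and a torus part supported on the
positive blocks, while `G_μ` contains `t_j` for every `j` in a positive block and, through the
`s_j`, acts transitively on each block. So `G_μ` determines the blocks (orbits of the permutation
parts) and their signs (which `t_j` it contains; this needs `r ≥ 2`). Conjugation by `g`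
transports both along the permutation part of `g`, so the multiset of signed block sizes, i.e.
`μ` up to reordering, is a conjugacy invariant. Conversely, a reordering of the parts is realised
by the permutation moving whole blocks, which conjugates `Π_λ` onto `Π_μ`.
-/

open Equiv SemidirectProduct

namespace CycSol

/-- The action of the symmetric group on the "torus" `(ℤ/r)^n` by permuting coordinates. -/
def act (r n : ℕ) : Equiv.Perm (Fin n) →* MulAut (Multiplicative (Fin n → ZMod r)) where
  toFun w :=
    { toFun := fun f => Multiplicative.ofAdd fun i => Multiplicative.toAdd f (w⁻¹ i)
      invFun := fun f => Multiplicative.ofAdd fun i => Multiplicative.toAdd f (w i)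
      left_inv := fun f => by
        show Multiplicative.ofAdd (fun i => Multiplicative.toAdd f (w⁻¹ (w i))) = f
        simp
      right_inv := fun f => by
        show Multiplicative.ofAdd (fun i => Multiplicative.toAdd f (w (w⁻¹ i))) = f
        simp
      map_mul' := fun f g => rfl }
  map_one' := by
    ext f : 1
    show Multiplicative.ofAdd (fun i => Multiplicative.toAdd f ((1 : Equiv.Perm (Fin n))⁻¹ i)) = f
    simp
  map_mul' := fun u v => by
    ext f : 1
    show Multiplicative.ofAdd (fun i => Multiplicative.toAdd f ((u * v)⁻¹ i)) = _
    simp [Equiv.Perm.mul_apply, mul_inv_rev]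

/-- The wreath product `(ℤ/r) ≀ S_n`, i.e. the complex reflection group `G(r,1,n)`. -/
abbrev Grn (r n : ℕ) :=
  SemidirectProduct (Multiplicative (Fin n → ZMod r)) (Equiv.Perm (Fin n)) (act r n)

/-- The generator `t_i`. -/
def tGen (r n : ℕ) (i : Fin n) : Grn r n :=
  inl (Multiplicative.ofAdd (Pi.single i 1))

/-- `sGen i j` is the transposition `(i,j)`, viewed inside `G(r,1,n)`. -/
def sGen (r n : ℕ) (i j : Fin n) : Grn r n := inr (Equiv.swap i j)

/-- `t^α` for a vector `α ∈ {0,…,r-1}^n`. -/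
def tPow (r n : ℕ) (α : Fin n → Fin r) : Grn r n :=
  inl (Multiplicative.ofAdd fun i => ((α i : ℕ) : ZMod r))

/-- The generating set `Π = {t_1,…,t_n, s_1,…,s_{n-1}}`. -/
def PiSet (r n : ℕ) : Set (Grn r n) :=
  {g | (∃ i : Fin n, g = tGen r n i) ∨
       (∃ i j : Fin n, (j : ℕ) = (i : ℕ) + 1 ∧ g = sGen r n i j)}

/-- The `Π`-length of an element of `G(r,1,n)`. -/
noncomputable def len (r n : ℕ) (g : Grn r n) : ℕ :=
  sInf {k | ∃ l : List (Grn r n), l.length = k ∧ (∀ x ∈ l, x ∈ PiSet r n) ∧ l.prod = g}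

/-- A signed composition of `n`: a list of nonzero integers whose absolute values sum to `n`. -/
def IsSignedComp (n : ℕ) (μ : List ℤ) : Prop :=
  (∀ x ∈ μ, x ≠ 0) ∧ (μ.map Int.natAbs).sum = n

/-- The type of signed compositions of `n`. -/
abbrev SComp (n : ℕ) := {l : List ℤ // IsSignedComp n l}

/-- `μ̄_i = |μ_1| + ⋯ + |μ_i|`. -/
def absPrefix (μ : List ℤ) (i : ℕ) : ℕ := ((μ.take i).map Int.natAbs).sum

/-- The subset `Π_μ ⊆ Π` attached to a signed composition `μ` (here `t_j, s_j` are indexed by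
`j : Fin n`, i.e. `0`-based). -/
def PiMu (r n : ℕ) (μ : List ℤ) : Set (Grn r n) :=
  {g | (∃ j : Fin n, (∃ i, i < μ.length ∧ 0 < μ.getD i 0 ∧
          absPrefix μ i ≤ (j : ℕ) ∧ (j : ℕ) < absPrefix μ (i + 1)) ∧ g = tGen r n j) ∨
       (∃ j k : Fin n, (k : ℕ) = (j : ℕ) + 1 ∧ (∃ i, i < μ.length ∧
          absPrefix μ i ≤ (j : ℕ) ∧ (k : ℕ) < absPrefix μ (i + 1)) ∧ g = sGen r n j k)}

/-- The reflection subgroup `G_μ = ⟨Π_μ⟩`. -/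
def Gmu (r n : ℕ) (μ : List ℤ) : Subgroup (Grn r n) := Subgroup.closure (PiMu r n μ)

/-- The subgroup `T = (ℤ/r)^n` of `G(r,1,n)`. -/
def Tsub (r n : ℕ) : Subgroup (Grn r n) :=
  (inl : Multiplicative (Fin n → ZMod r) →* Grn r n).range

/-- The subgroup `S_n` of `G(r,1,n)`. -/
def Ssub (r n : ℕ) : Subgroup (Grn r n) :=
  (inr : Equiv.Perm (Fin n) →* Grn r n).range

/-- `T_{-μ}`: the subgroup of `T` generated by those `t_i` not lying in `G_μ`. -/
def Tneg (r n : ℕ) (μ : List ℤ) : Subgroup (Grn r n) :=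
  Subgroup.closure {g | ∃ i : Fin n, tGen r n i ∉ Gmu r n μ ∧ g = tGen r n i}

/-- The Young subgroup `S_{μ^+} = G_μ ∩ S_n`, as a subgroup of `S_n`. -/
def youngS (r n : ℕ) (μ : List ℤ) : Subgroup (Equiv.Perm (Fin n)) :=
  (Gmu r n μ).comap (inr : Equiv.Perm (Fin n) →* Grn r n)

/-- `𝒟_{μ^+}`: the permutations of minimal (Coxeter = `Π`-) length in their right coset
`S_{μ^+} w`. -/
noncomputable def Dset (r n : ℕ) (μ : List ℤ) : Set (Equiv.Perm (Fin n)) :=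
  {d | ∀ w : Equiv.Perm (Fin n), w * d⁻¹ ∈ youngS r n μ →
        len r n (inr d) ≤ len r n (inr w)}

/-- `𝒟_{μ^+ν^+} = 𝒟_{μ^+} ∩ 𝒟_{ν^+}^{-1}`. -/
noncomputable def DD (r n : ℕ) (μ ν : List ℤ) : Set (Equiv.Perm (Fin n)) :=
  Dset r n μ ∩ {d | d⁻¹ ∈ Dset r n ν}

/-- `𝓔_μ`: the elements of minimal `Π`-length in their right coset `G_μ e`. -/
noncomputable def Ecal (r n : ℕ) (μ : List ℤ) : Set (Grn r n) :=
  {e | ∀ g : Grn r n, g * e⁻¹ ∈ Gmu r n μ → len r n e ≤ len r n g}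

/-- `E_μ = Σ_{e ∈ 𝓔_μ} e` in the group algebra `R G(r,1,n)`. -/
noncomputable def Emu (R : Type) [CommRing R] (r n : ℕ) (μ : List ℤ) :
    MonoidAlgebra R (Grn r n) :=
  ∑ᶠ e ∈ Ecal r n μ, MonoidAlgebra.of R (Grn r n) e

/-- The generating set `{E_μ : μ a signed composition of n}` of the cyclotomic Solomon
algebra. -/
def SolSet (R : Type) [CommRing R] (r n : ℕ) : Set (MonoidAlgebra R (Grn r n)) :=
  {x | ∃ μ : List ℤ, IsSignedComp n μ ∧ x = Emu R r n μ}

/-- The cyclotomic Solomon algebra `Sol(G(r,1,n))`. -/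
noncomputable def Sol (R : Type) [CommRing R] (r n : ℕ) :
    Subalgebra R (MonoidAlgebra R (Grn r n)) :=
  Algebra.adjoin R (SolSet R r n)

end CycSol

namespace Subgroup

variable {G : Type*} [Group G]

lemma mem_map_conj_inv_iff (H : Subgroup G) (g u : G) :
    u ∈ H.map (MulAut.conj g⁻¹).toMonoidHom ↔ g * u * g⁻¹ ∈ H := by
  rw [mem_map_equiv, MulAut.conj_symm_apply, inv_inv]

lemma closure_eq_map_conj_inv {S T : Set G} (g : G)
    (hST : ∀ x ∈ S, g * x * g⁻¹ ∈ T) (hTS : ∀ y ∈ T, g⁻¹ * y * g ∈ S) :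
    closure S = (closure T).map (MulAut.conj g⁻¹).toMonoidHom := by
  rw [MonoidHom.map_closure]
  congr 1
  ext x
  simp only [Set.mem_image, MulEquiv.coe_toMonoidHom, MulAut.conj_apply, inv_inv]
  refine ⟨fun hx => ⟨_, hST x hx, by group⟩, ?_⟩
  rintro ⟨y, hy, rfl⟩
  exact hTS y hy

end Subgroup

namespace CycSol

open Finset

section Blocks

variable {n : ℕ} {μ : List ℤ}

lemma absPrefix_succ (μ : List ℤ) {i : ℕ} (h : i < μ.length) :
    absPrefix μ (i + 1) = absPrefix μ i + μ[i].natAbs := by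
  rw [absPrefix, absPrefix, List.map_take, List.map_take,
    List.sum_take_succ _ i (by simpa using h), List.getElem_map]

lemma absPrefix_of_length_le (μ : List ℤ) {i : ℕ} (h : μ.length ≤ i) :
    absPrefix μ i = absPrefix μ μ.length := by
  simp [absPrefix, List.take_of_length_le h]

lemma absPrefix_mono (μ : List ℤ) : Monotone (absPrefix μ) := by
  refine monotone_nat_of_le_succ fun i => ?_
  rcases lt_or_ge i μ.length with h | h
  · rw [absPrefix_succ μ h]; omega
  · rw [absPrefix_of_length_le μ h, absPrefix_of_length_le μ (i := i + 1) (by omega)]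

lemma absPrefix_length (hμ : IsSignedComp n μ) : absPrefix μ μ.length = n := by
  simpa [absPrefix] using hμ.2

lemma absPrefix_le (hμ : IsSignedComp n μ) (i : ℕ) : absPrefix μ i ≤ n := by
  rcases le_or_gt μ.length i with h | h
  · rw [absPrefix_of_length_le μ h, absPrefix_length hμ]
  · exact (absPrefix_mono μ h.le).trans_eq (absPrefix_length hμ)

lemma absPrefix_lt_succ (hμ : IsSignedComp n μ) {i : ℕ} (h : i < μ.length) :
    absPrefix μ i < absPrefix μ (i + 1) := by
  have := hμ.1 _ (List.getElem_mem h)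
  rw [absPrefix_succ μ h]; omega

/-- The (`0`-based) index of the block of `μ` containing the (`0`-based) position `j`. -/
def blockIdx (μ : List ℤ) (j : ℕ) : ℕ := Nat.findGreatest (fun i => absPrefix μ i ≤ j) μ.length

lemma absPrefix_blockIdx_le (μ : List ℤ) (j : ℕ) : absPrefix μ (blockIdx μ j) ≤ j :=
  Nat.findGreatest_spec (P := fun i => absPrefix μ i ≤ j) (Nat.zero_le _) (Nat.zero_le _)

lemma blockIdx_lt_length (hμ : IsSignedComp n μ) {j : ℕ} (hj : j < n) :
    blockIdx μ j < μ.length := by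
  refine lt_of_le_of_ne (Nat.findGreatest_le _) fun h => ?_
  have := absPrefix_blockIdx_le μ j
  rw [h, absPrefix_length hμ] at this
  omega

lemma lt_absPrefix_blockIdx_succ (hμ : IsSignedComp n μ) {j : ℕ} (hj : j < n) :
    j < absPrefix μ (blockIdx μ j + 1) :=
  not_le.mp <| Nat.findGreatest_is_greatest (P := fun i => absPrefix μ i ≤ j)
    (Nat.lt_succ_self (blockIdx μ j)) (blockIdx_lt_length hμ hj)

lemma blockIdx_eq_iff (hμ : IsSignedComp n μ) {i j : ℕ} (hj : j < n) :
    blockIdx μ j = i ↔ absPrefix μ i ≤ j ∧ j < absPrefix μ (i + 1) := by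
  refine ⟨fun h => h ▸ ⟨absPrefix_blockIdx_le μ j, lt_absPrefix_blockIdx_succ hμ hj⟩,
    fun ⟨h1, h2⟩ => ?_⟩
  have h3 := absPrefix_blockIdx_le μ j
  have h4 := lt_absPrefix_blockIdx_succ hμ hj
  rcases lt_trichotomy (blockIdx μ j) i with h | h | h
  · have := absPrefix_mono μ (show blockIdx μ j + 1 ≤ i by omega); omega
  · exact h
  · have := absPrefix_mono μ (show i + 1 ≤ blockIdx μ j by omega); omega

lemma blockIdx_mono (μ : List ℤ) : Monotone (blockIdx μ) :=
  fun _ _ h => Nat.findGreatest_mono (fun _ hi => hi.trans h) le_rfl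

lemma card_blockIdx_eq (hμ : IsSignedComp n μ) {i : ℕ} (hi : i < μ.length) :
    #{j : Fin n | blockIdx μ j = i} = μ[i].natAbs := by
  have hle := absPrefix_le hμ (i + 1)
  have hsize : μ[i].natAbs = absPrefix μ (i + 1) - absPrefix μ i := by
    rw [absPrefix_succ μ hi]; omega
  rw [← card_map Fin.valEmbedding, hsize, ← Nat.card_Ico]
  congr 1
  ext j
  simp only [mem_map, mem_filter, mem_univ, true_and, Fin.valEmbedding_apply, mem_Ico]
  constructor
  · rintro ⟨j, hj, rfl⟩
    exact (blockIdx_eq_iff hμ j.isLt).1 hj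
  · intro hj
    exact ⟨⟨j, by omega⟩, (blockIdx_eq_iff hμ (by omega)).2 hj, rfl⟩

def blockEntry (μ : List ℤ) (j : ℕ) : ℤ := μ.getD (blockIdx μ j) 0

lemma blockEntry_eq_getElem (hμ : IsSignedComp n μ) {j : ℕ} (hj : j < n) :
    blockEntry μ j = μ[blockIdx μ j]'(blockIdx_lt_length hμ hj) :=
  List.getD_eq_getElem _ _ _

lemma blockEntry_ne_zero (hμ : IsSignedComp n μ) {j : ℕ} (hj : j < n) : blockEntry μ j ≠ 0 := by
  rw [blockEntry_eq_getElem hμ hj]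
  exact hμ.1 _ (List.getElem_mem _)

lemma card_blockIdx_eq_natAbs_blockEntry (hμ : IsSignedComp n μ) (j : Fin n) :
    #{k : Fin n | blockIdx μ k = blockIdx μ j} = (blockEntry μ j).natAbs := by
  rw [card_blockIdx_eq hμ (blockIdx_lt_length hμ j.isLt), blockEntry_eq_getElem hμ j.isLt]

lemma card_blockEntry_eq (hμ : IsSignedComp n μ) (x : ℤ) :
    #{j : Fin n | blockEntry μ j = x} = x.natAbs * μ.count x := by
  let blk : Fin n → Fin μ.length := fun j => ⟨blockIdx μ j, blockIdx_lt_length hμ j.isLt⟩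
  have hentry : ∀ j : Fin n, blockEntry μ j = μ.get (blk j) := fun j =>
    blockEntry_eq_getElem hμ j.isLt
  rw [card_eq_sum_card_fiberwise (f := blk) (t := {i | μ.get i = x})
    (fun j hj => by simpa [hentry] using hj)]
  have hfiber : ∀ i ∈ ({i | μ.get i = x} : Finset (Fin μ.length)),
      #{j ∈ {j : Fin n | blockEntry μ j = x} | blk j = i} = x.natAbs := by
    intro i hi
    rw [mem_filter] at hi
    rw [← hi.2, List.get_eq_getElem, ← card_blockIdx_eq hμ i.isLt]
    congr 1
    ext j
    simp only [mem_filter, mem_univ, true_and, hentry, blk, Fin.ext_iff]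
    constructor
    · exact fun h => h.2
    · intro h
      exact ⟨congrArg μ.get (Fin.ext h), h⟩
  rw [sum_congr rfl hfiber, sum_const, smul_eq_mul, mul_comm]
  congr 1
  exact Fin.card_filter_univ_eq_vector_get_eq_count x ⟨μ, rfl⟩

lemma perm_of_blockEntry_apply_eq {α β : List ℤ} (hα : IsSignedComp n α)
    (hβ : IsSignedComp n β) (v : Perm (Fin n)) (hv : ∀ j, blockEntry β (v j) = blockEntry α j) :
    α.Perm β := by
  rw [List.perm_iff_count]
  intro x
  by_cases hx : x = 0
  · rw [List.count_eq_zero.2 fun h => hα.1 x h hx, List.count_eq_zero.2 fun h => hβ.1 x h hx]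
  have hcard : #{j : Fin n | blockEntry α j = x} = #{j : Fin n | blockEntry β j = x} :=
    card_equiv v fun j => by simp [hv]
  rw [card_blockEntry_eq hα, card_blockEntry_eq hβ] at hcard
  exact Nat.eq_of_mul_eq_mul_left (Int.natAbs_pos.2 hx) hcard

end Blocks

section Group

variable {r n : ℕ} {μ : List ℤ}

lemma mem_PiMu_iff (hμ : IsSignedComp n μ) {x : Grn r n} :
    x ∈ PiMu r n μ ↔ (∃ j : Fin n, 0 < blockEntry μ j ∧ x = tGen r n j) ∨
      ∃ j k : Fin n, (k : ℕ) = j + 1 ∧ blockIdx μ j = blockIdx μ k ∧ x = sGen r n j k := by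
  refine or_congr (exists_congr fun j => and_congr_left fun _ => ?_)
    (exists₂_congr fun j k => and_congr_right fun hk => and_congr_left fun _ => ?_)
  · constructor
    · rintro ⟨i, -, hpos, h1, h2⟩
      rwa [blockEntry, (blockIdx_eq_iff hμ j.isLt).2 ⟨h1, h2⟩]
    · exact fun h => ⟨_, blockIdx_lt_length hμ j.isLt, h, absPrefix_blockIdx_le μ j,
        lt_absPrefix_blockIdx_succ hμ j.isLt⟩
  · constructor
    · rintro ⟨i, -, h1, h2⟩
      rw [(blockIdx_eq_iff hμ j.isLt).2 ⟨h1, by omega⟩,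
        (blockIdx_eq_iff hμ k.isLt).2 ⟨by omega, h2⟩]
    · exact fun h => ⟨_, blockIdx_lt_length hμ j.isLt, absPrefix_blockIdx_le μ j,
        h ▸ lt_absPrefix_blockIdx_succ hμ k.isLt⟩

lemma toAdd_act_apply (w : Perm (Fin n)) (x : Multiplicative (Fin n → ZMod r)) (j : Fin n) :
    Multiplicative.toAdd (act r n w x) j = Multiplicative.toAdd x (w⁻¹ j) := rfl

def blockSubgroup (r n : ℕ) (μ : List ℤ) : Subgroup (Grn r n) where
  carrier := {g | (∀ j, blockIdx μ (g.right j) = blockIdx μ j) ∧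
    ∀ j, Multiplicative.toAdd g.left j ≠ 0 → 0 < blockEntry μ j}
  one_mem' := ⟨fun _ => rfl, fun _ h => absurd rfl h⟩
  mul_mem' := by
    rintro a b ⟨ha, ha'⟩ ⟨hb, hb'⟩
    refine ⟨fun j => by rw [mul_right, Perm.mul_apply, ha, hb], fun j hj => ?_⟩
    rw [mul_left, toAdd_mul, Pi.add_apply, toAdd_act_apply] at hj
    by_cases h0 : Multiplicative.toAdd a.left j = 0
    · rw [h0, zero_add] at hj
      have := hb' _ hj
      rwa [blockEntry, ← ha, Perm.coe_inv, Equiv.apply_symm_apply] at this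
    · exact ha' j h0
  inv_mem' := by
    rintro a ⟨ha, ha'⟩
    refine ⟨fun j => ?_, fun j hj => ?_⟩
    · rw [inv_right, ← ha, Perm.coe_inv, Equiv.apply_symm_apply]
    · rw [inv_left, toAdd_act_apply, inv_inv, toAdd_inv, Pi.neg_apply, neg_ne_zero] at hj
      have := ha' _ hj
      rwa [blockEntry, ha] at this

lemma Gmu_le_blockSubgroup (hμ : IsSignedComp n μ) : Gmu r n μ ≤ blockSubgroup r n μ := by
  rw [Gmu, Subgroup.closure_le]
  intro g hg
  rcases (mem_PiMu_iff hμ).1 hg with ⟨j, hpos, rfl⟩ | ⟨j, k, -, hjk, rfl⟩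
  · refine ⟨fun _ => rfl, fun m hm => ?_⟩
    obtain rfl : m = j := by
      by_contra hne
      exact hm (Pi.single_eq_of_ne hne _)
    exact hpos
  · refine ⟨fun m => ?_, fun _ hm => absurd rfl hm⟩
    show blockIdx μ (swap j k m) = blockIdx μ m
    rcases eq_or_ne m j with rfl | hmj
    · rw [swap_apply_left, hjk]
    rcases eq_or_ne m k with rfl | hmk
    · rw [swap_apply_right, hjk]
    · rw [swap_apply_of_ne_of_ne hmj hmk]

lemma tGen_mem_Gmu_iff (hr : 2 ≤ r) (hμ : IsSignedComp n μ) (j : Fin n) :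
    tGen r n j ∈ Gmu r n μ ↔ 0 < blockEntry μ j := by
  refine ⟨fun h => (Gmu_le_blockSubgroup hμ h).2 j ?_, fun h => ?_⟩
  · have : Fact (1 < r) := ⟨hr⟩
    simp [tGen]
  · exact Subgroup.subset_closure ((mem_PiMu_iff hμ).2 (.inl ⟨j, h, rfl⟩))

lemma sGen_mem_Gmu (hμ : IsSignedComp n μ) {j k : Fin n} (hk : (k : ℕ) = j + 1)
    (hjk : blockIdx μ j = blockIdx μ k) : sGen r n j k ∈ Gmu r n μ :=
  Subgroup.subset_closure ((mem_PiMu_iff hμ).2 (.inr ⟨j, k, hk, hjk, rfl⟩))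

lemma exists_mem_Gmu_right_apply_eq (hμ : IsSignedComp n μ) {i j : Fin n} (hij : i ≤ j)
    (h : blockIdx μ i = blockIdx μ j) : ∃ u ∈ Gmu r n μ, u.right i = j := by
  obtain ⟨d, hd⟩ := Nat.exists_eq_add_of_le (Fin.le_iff_val_le_val.1 hij)
  induction d generalizing j with
  | zero => exact ⟨1, one_mem _, Fin.ext hd.symm⟩
  | succ d ih =>
    obtain ⟨m, hm⟩ : ∃ m : Fin n, (m : ℕ) = i + d := ⟨⟨i + d, by omega⟩, rfl⟩
    have hmj : blockIdx μ m = blockIdx μ j :=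
      le_antisymm (blockIdx_mono μ (by omega)) (h ▸ blockIdx_mono μ (by omega))
    obtain ⟨u, hu, hui⟩ := ih (Fin.le_iff_val_le_val.2 (by omega)) (h.trans hmj.symm) hm
    refine ⟨sGen r n m j * u, mul_mem (sGen_mem_Gmu hμ (by omega) hmj) hu, ?_⟩
    rw [mul_right, Perm.mul_apply, hui]
    exact swap_apply_left m j

lemma blockIdx_eq_iff_exists_mem_Gmu (hμ : IsSignedComp n μ) (i j : Fin n) :
    blockIdx μ i = blockIdx μ j ↔ ∃ u ∈ Gmu r n μ, u.right i = j := by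
  refine ⟨fun h => ?_, fun ⟨u, hu, hij⟩ => hij ▸ ((Gmu_le_blockSubgroup hμ hu).1 i).symm⟩
  rcases le_total i j with hij | hji
  · exact exists_mem_Gmu_right_apply_eq hμ hij h
  · obtain ⟨u, hu, hji⟩ := exists_mem_Gmu_right_apply_eq (r := r) hμ hji h.symm
    exact ⟨u⁻¹, inv_mem hu, by rw [inv_right, ← hji, Perm.coe_inv, Equiv.symm_apply_apply]⟩

lemma conj_tGen (g : Grn r n) (i : Fin n) : g * tGen r n i * g⁻¹ = tGen r n (g.right i) := by
  ext j
  · simp [tGen, toAdd_act_apply, Pi.single_apply, Equiv.symm_apply_eq]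
  · simp [tGen]

lemma inr_mul_sGen_mul_inv (w : Perm (Fin n)) (i j : Fin n) :
    inr w * sGen r n i j * (inr w)⁻¹ = sGen r n (w i) (w j) := by
  rw [sGen, sGen, ← map_inv, ← map_mul, ← map_mul, swap_apply_apply]

end Group

section Conjugacy

variable {r n : ℕ} {α β : List ℤ}

lemma blockIdx_right_apply_eq_iff (hα : IsSignedComp n α) (hβ : IsSignedComp n β)
    {g : Grn r n} (hg : ∀ u, u ∈ Gmu r n α ↔ g * u * g⁻¹ ∈ Gmu r n β) (i j : Fin n) :
    blockIdx β (g.right i) = blockIdx β (g.right j) ↔ blockIdx α i = blockIdx α j := by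
  rw [blockIdx_eq_iff_exists_mem_Gmu hα, blockIdx_eq_iff_exists_mem_Gmu hβ]
  constructor
  · rintro ⟨u, hu, hij⟩
    refine ⟨g⁻¹ * u * g, (hg _).2 (by simpa [mul_assoc] using hu), ?_⟩
    simp [hij]
  · rintro ⟨u, hu, rfl⟩
    exact ⟨g * u * g⁻¹, (hg u).1 hu, by simp⟩

lemma blockEntry_right_apply (hr : 2 ≤ r) (hα : IsSignedComp n α) (hβ : IsSignedComp n β)
    {g : Grn r n} (hg : ∀ u, u ∈ Gmu r n α ↔ g * u * g⁻¹ ∈ Gmu r n β) (j : Fin n) :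
    blockEntry β (g.right j) = blockEntry α j := by
  have hsign : 0 < blockEntry β (g.right j) ↔ 0 < blockEntry α j := by
    rw [← tGen_mem_Gmu_iff hr hα, hg, conj_tGen, tGen_mem_Gmu_iff hr hβ]
  have hsize : (blockEntry β (g.right j)).natAbs = (blockEntry α j).natAbs := by
    rw [← card_blockIdx_eq_natAbs_blockEntry hβ, ← card_blockIdx_eq_natAbs_blockEntry hα]
    exact (card_equiv g.right fun i => by simp [blockIdx_right_apply_eq_iff hα hβ hg]).symm
  have := blockEntry_ne_zero hα j.isLt
  omega

lemma perm_of_Gmu_eq_map_conj (hr : 2 ≤ r) (hα : IsSignedComp n α) (hβ : IsSignedComp n β)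
    {g : Grn r n} (h : Gmu r n α = (Gmu r n β).map (MulAut.conj g⁻¹).toMonoidHom) :
    α.Perm β :=
  perm_of_blockEntry_apply_eq hα hβ g.right <| blockEntry_right_apply hr hα hβ fun u => by
    rw [h, Subgroup.mem_map_conj_inv_iff]

end Conjugacy

section MoveBlocks

variable {n : ℕ} {α β : List ℤ} {σ τ : ℕ → ℕ}

def IsBlockMatching (α β : List ℤ) (σ τ : ℕ → ℕ) : Prop :=
  ∀ i < α.length, β[σ i]? = α[i]? ∧ τ (σ i) = i

lemma exists_isBlockMatching_of_perm (h : α.Perm β) :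
    ∃ σ τ, IsBlockMatching α β σ τ ∧ IsBlockMatching β α τ σ := by
  refine ⟨fun i => if hi : i < α.length then h.idxBij ⟨i, hi⟩ else 0,
    fun i => if hi : i < β.length then h.symm.idxBij ⟨i, hi⟩ else 0, fun i hi => ?_, fun i hi => ?_⟩
  · have hlt := (h.idxBij ⟨i, hi⟩).isLt
    simp only [hi, hlt, dite_true, Fin.eta, h.idxBij_symm_idxBij, List.getElem?_eq_getElem,
      h.getElem_idxBij_eq_getElem, and_true]
  · have hlt := (h.symm.idxBij ⟨i, hi⟩).isLt
    simp only [hi, hlt, dite_true, Fin.eta, h.idxBij_idxBij_symm, List.getElem?_eq_getElem,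
      h.getElem_idxBij_symm_eq_getElem, and_true]

lemma IsBlockMatching.exists_getElem_eq (h : IsBlockMatching α β σ τ) {i : ℕ}
    (hi : i < α.length) : ∃ hσ : σ i < β.length, β[σ i] = α[i] :=
  List.getElem?_eq_some_iff.1 ((h i hi).1.trans (List.getElem?_eq_getElem hi))

/-- Sends position `j` to the position with the same offset in the block `σ i` of `β`,
where `i` is the block of `α` containing `j`. -/
def moveBlocks (α β : List ℤ) (σ : ℕ → ℕ) (j : ℕ) : ℕ :=
  absPrefix β (σ (blockIdx α j)) + (j - absPrefix α (blockIdx α j))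

lemma moveBlocks_lt_absPrefix (hα : IsSignedComp n α) (h : IsBlockMatching α β σ τ) {j : ℕ}
    (hj : j < n) : moveBlocks α β σ j < absPrefix β (σ (blockIdx α j) + 1) := by
  have hi := blockIdx_lt_length hα hj
  obtain ⟨hσ, heq⟩ := h.exists_getElem_eq hi
  have h1 := absPrefix_blockIdx_le α j
  have h2 := lt_absPrefix_blockIdx_succ hα hj
  rw [absPrefix_succ α hi] at h2
  rw [moveBlocks, absPrefix_succ β hσ, heq]
  omega

lemma moveBlocks_lt (hα : IsSignedComp n α) (hβ : IsSignedComp n β)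
    (h : IsBlockMatching α β σ τ) {j : ℕ} (hj : j < n) : moveBlocks α β σ j < n :=
  (moveBlocks_lt_absPrefix hα h hj).trans_le (absPrefix_le hβ _)

lemma blockIdx_moveBlocks (hα : IsSignedComp n α) (hβ : IsSignedComp n β)
    (h : IsBlockMatching α β σ τ) {j : ℕ} (hj : j < n) :
    blockIdx β (moveBlocks α β σ j) = σ (blockIdx α j) :=
  (blockIdx_eq_iff hβ (moveBlocks_lt hα hβ h hj)).2
    ⟨Nat.le_add_right _ _, moveBlocks_lt_absPrefix hα h hj⟩

lemma blockEntry_moveBlocks (hα : IsSignedComp n α) (hβ : IsSignedComp n β)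
    (h : IsBlockMatching α β σ τ) {j : ℕ} (hj : j < n) :
    blockEntry β (moveBlocks α β σ j) = blockEntry α j := by
  rw [blockEntry, blockEntry, blockIdx_moveBlocks hα hβ h hj, List.getD_eq_getElem?_getD,
    List.getD_eq_getElem?_getD, (h _ (blockIdx_lt_length hα hj)).1]

lemma moveBlocks_moveBlocks (hα : IsSignedComp n α) (hβ : IsSignedComp n β)
    (h : IsBlockMatching α β σ τ) {j : ℕ} (hj : j < n) :
    moveBlocks β α τ (moveBlocks α β σ j) = j := by
  have h1 := absPrefix_blockIdx_le α j
  rw [moveBlocks, blockIdx_moveBlocks hα hβ h hj, (h _ (blockIdx_lt_length hα hj)).2, moveBlocks]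
  omega

lemma moveBlocks_succ {j : ℕ} (hj : blockIdx α (j + 1) = blockIdx α j) :
    moveBlocks α β σ (j + 1) = moveBlocks α β σ j + 1 := by
  have := absPrefix_blockIdx_le α j
  rw [moveBlocks, moveBlocks, hj]
  omega

lemma exists_perm_moveBlocks (hα : IsSignedComp n α) (hβ : IsSignedComp n β)
    (hστ : IsBlockMatching α β σ τ) (hτσ : IsBlockMatching β α τ σ) :
    ∃ w : Perm (Fin n), ∀ j : Fin n,
      (w j : ℕ) = moveBlocks α β σ j ∧ (w⁻¹ j : ℕ) = moveBlocks β α τ j :=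
  ⟨{ toFun := fun j => ⟨_, moveBlocks_lt hα hβ hστ j.isLt⟩
     invFun := fun j => ⟨_, moveBlocks_lt hβ hα hτσ j.isLt⟩
     left_inv := fun j => Fin.ext (moveBlocks_moveBlocks hα hβ hστ j.isLt)
     right_inv := fun j => Fin.ext (moveBlocks_moveBlocks hβ hα hτσ j.isLt) },
    fun _ => ⟨rfl, rfl⟩⟩

end MoveBlocks

section Reordering

variable {r n : ℕ} {α β : List ℤ} {σ τ : ℕ → ℕ}

lemma conj_mem_PiMu_of_moveBlocks (hα : IsSignedComp n α) (hβ : IsSignedComp n β)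
    (h : IsBlockMatching α β σ τ) {w : Perm (Fin n)}
    (hw : ∀ j : Fin n, (w j : ℕ) = moveBlocks α β σ j) {x : Grn r n} (hx : x ∈ PiMu r n α) :
    inr w * x * (inr w)⁻¹ ∈ PiMu r n β := by
  rw [mem_PiMu_iff hα] at hx
  rw [mem_PiMu_iff hβ]
  rcases hx with ⟨j, hpos, rfl⟩ | ⟨j, k, hk, hjk, rfl⟩
  · refine .inl ⟨w j, ?_, by rw [conj_tGen, right_inr]⟩
    rwa [hw, blockEntry_moveBlocks hα hβ h j.isLt]
  · refine .inr ⟨w j, w k, ?_, ?_, inr_mul_sGen_mul_inv w j k⟩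
    · rw [hw, hw, hk, moveBlocks_succ (hk ▸ hjk.symm)]
    · rw [hw, hw, blockIdx_moveBlocks hα hβ h j.isLt, blockIdx_moveBlocks hα hβ h k.isLt, hjk]

lemma exists_Gmu_eq_map_conj_of_perm (hα : IsSignedComp n α) (hβ : IsSignedComp n β)
    (h : α.Perm β) : ∃ w : Perm (Fin n),
      Gmu r n α = (Gmu r n β).map (MulAut.conj ((inr w : Grn r n)⁻¹)).toMonoidHom := by
  obtain ⟨σ, τ, hστ, hτσ⟩ := exists_isBlockMatching_of_perm h
  obtain ⟨w, hw⟩ := exists_perm_moveBlocks hα hβ hστ hτσ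
  refine ⟨w, Subgroup.closure_eq_map_conj_inv _
    (fun x hx => conj_mem_PiMu_of_moveBlocks hα hβ hστ (fun j => (hw j).1) hx) fun y hy => ?_⟩
  simpa [← map_inv] using
    conj_mem_PiMu_of_moveBlocks (r := r) hβ hα hτσ (w := w⁻¹) (fun j => (hw j).2) hy

end Reordering

theorem stmt12_general (r n : ℕ) (hr : 2 ≤ r) (lam mu : List ℤ)
    (hlam : IsSignedComp n lam) (hmu : IsSignedComp n mu) :
    (lam.Perm mu ↔ ∃ w : Equiv.Perm (Fin n),
        Gmu r n lam = (Gmu r n mu).map (MulAut.conj ((inr w : Grn r n)⁻¹)).toMonoidHom) ∧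
    (lam.Perm mu ↔ ∃ g : Grn r n,
        Gmu r n lam = (Gmu r n mu).map (MulAut.conj g⁻¹).toMonoidHom) := by
  have hperm : ∀ g : Grn r n,
      Gmu r n lam = (Gmu r n mu).map (MulAut.conj g⁻¹).toMonoidHom → lam.Perm mu :=
    fun _ => perm_of_Gmu_eq_map_conj hr hlam hmu
  refine ⟨⟨exists_Gmu_eq_map_conj_of_perm hlam hmu, fun ⟨w, hw⟩ => hperm _ hw⟩,
    ⟨fun h => ?_, fun ⟨g, hg⟩ => hperm g hg⟩⟩
  obtain ⟨w, hw⟩ := exists_Gmu_eq_map_conj_of_perm (r := r) hlam hmu h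
  exact ⟨inr w, hw⟩

theorem stmt12 (r n : ℕ) (hr : 2 ≤ r) (hn : 1 ≤ n) (lam mu : List ℤ)
    (hlam : IsSignedComp n lam) (hmu : IsSignedComp n mu) :
    (lam.Perm mu ↔ ∃ w : Equiv.Perm (Fin n),
        Gmu r n lam = (Gmu r n mu).map (MulAut.conj ((inr w : Grn r n)⁻¹)).toMonoidHom) ∧
    (lam.Perm mu ↔ ∃ g : Grn r n,
        Gmu r n lam = (Gmu r n mu).map (MulAut.conj g⁻¹).toMonoidHom) :=
  stmt12_general r n hr lam mu hlam hmu

end CycSol
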